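/- Let t ∈ ℕ, let Q be a set of connected X-labeled graphs, and let H ∈ mpcs_{+t}(Q). Then either H contains a boundary vertex, or H ∈ ext_t(Q). -/

import Mathlib

open SimpleGraph Set

def IsMinorModel {α β : Type*} (G : SimpleGraph α) (H : SimpleGraph β)
    (φ : β → Set α) : Prop :=
  (∀ w, (φ w).Nonempty) ∧
  (∀ w, (G.induce (φ w)).Connected) ∧
  (∀ w w', w ≠ w' → Disjoint (φ w) (φ w')) ∧
  (∀ w w', H.Adj w w' → ∃ a ∈ φ w, ∃ b ∈ φ w', G.Adj a b)

def within {α : Type*} (G : SimpleGraph α) (A : Set α) : SimpleGraph α where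
  Adj a b := a ∈ A ∧ b ∈ A ∧ G.Adj a b
  symm := ⟨fun a b ⟨ha, hb, h⟩ => ⟨hb, ha, h.symm⟩⟩
  loopless := ⟨fun a ⟨_, _, h⟩ => G.irrefl h⟩

def compIn {α : Type*} (G : SimpleGraph α) (A : Set α) (a : α) : Set α :=
  {b | b ∈ A ∧ (within G A).Reachable a b}

/-- An `X`-labeled `t`-boundaried graph: a graph with labelsets from `X` and an
injective (partial) boundary index function into `Fin t`. -/
structure BLGraph (X : Type) (t : ℕ) where
  V : Type
  G : SimpleGraph V
  lab : V → Set X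
  bd : V → Option (Fin t)
  inj : ∀ a b i, bd a = some i → bd b = some i → a = b

namespace BLGraph

variable {X : Type} {t : ℕ}

/-- Vertices of the glued graph `G₁ ⊕ G₂`: all of `G₁`, plus the vertices of `G₂`
whose boundary index (if any) does not occur in `G₁`. -/
def glueV (G₁ G₂ : BLGraph X t) : Type :=
  G₁.V ⊕ {b : G₂.V // ∀ i, G₂.bd b = some i → ∀ a, G₁.bd a ≠ some i}

/-- The canonical map of `G₂` into the glued graph. -/
noncomputable def emb2 (G₁ G₂ : BLGraph X t) (b : G₂.V) : glueV G₁ G₂ :=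
  letI : Decidable (∃ i, G₂.bd b = some i ∧ ∃ a, G₁.bd a = some i) :=
    Classical.propDecidable _
  if h : ∃ i, G₂.bd b = some i ∧ ∃ a, G₁.bd a = some i
  then Sum.inl h.choose_spec.2.choose
  else Sum.inr ⟨b, fun i hi a ha => h ⟨i, hi, a, ha⟩⟩

/-- The gluing operation `G₁ ⊕ G₂`, identifying boundary vertices carrying equal
indices and unioning labelsets. -/
noncomputable def glue (G₁ G₂ : BLGraph X t) : BLGraph X t where
  V := glueV G₁ G₂
  G := SimpleGraph.fromRel (fun x y =>
    (∃ a b, x = Sum.inl a ∧ y = Sum.inl b ∧ G₁.G.Adj a b) ∨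
    (∃ a b, x = emb2 G₁ G₂ a ∧ y = emb2 G₁ G₂ b ∧ G₂.G.Adj a b))
  lab x := {ℓ | (∃ a, x = Sum.inl a ∧ ℓ ∈ G₁.lab a) ∨
    (∃ b, x = emb2 G₁ G₂ b ∧ ℓ ∈ G₂.lab b)}
  bd := Sum.elim G₁.bd (fun b => G₂.bd b.1)
  inj := by
    rintro (a | a) (b | b) i ha hb
    · exact congrArg Sum.inl (G₁.inj a b i ha hb)
    · exact absurd ha (b.2 i hb a)
    · exact absurd hb (a.2 i ha b)
    · exact congrArg Sum.inr (Subtype.ext (G₂.inj _ _ i ha hb))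

/-- A boundaried labeled minor model of the pattern `P` in the host `H`. -/
def BMinorModel (P H : BLGraph X t) (φ : P.V → Set H.V) : Prop :=
  IsMinorModel H.G P.G φ ∧
  (∀ w, ∀ ℓ ∈ P.lab w, ∃ a ∈ φ w, ℓ ∈ H.lab a) ∧
  (∀ w a, a ∈ φ w → ∀ i, H.bd a = some i → P.bd w = some i) ∧
  (∀ w i, P.bd w = some i → ∃ a ∈ φ w, H.bd a = some i)

/-- `P` is a boundaried labeled minor of `H`. -/
def BMinor (P H : BLGraph X t) : Prop := ∃ φ, BMinorModel P H φ

/-- Piece: a single boundary vertex, with no labels. -/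
def pieceBd (H : BLGraph X t) (a : H.V) : BLGraph X t where
  V := PUnit
  G := ⊥
  lab _ := ∅
  bd _ := H.bd a
  inj := fun x y _ _ _ => Subsingleton.elim x y

/-- Piece: a single boundary vertex carrying one of its labels. -/
def pieceLab (H : BLGraph X t) (a : H.V) (ℓ : X) : BLGraph X t where
  V := PUnit
  G := ⊥
  lab _ := {ℓ}
  bd _ := H.bd a
  inj := fun x y _ _ _ => Subsingleton.elim x y

/-- Piece: a single edge between two boundary vertices, with no labels. -/
def pieceEdge (H : BLGraph X t) (a b : H.V) (hne : a ≠ b) : BLGraph X t where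
  V := Bool
  G := SimpleGraph.fromRel (fun x y => x = true ∧ y = false)
  lab _ := ∅
  bd x := cond x (H.bd a) (H.bd b)
  inj := by
    intro x y i hx hy
    cases x <;> cases y
    · rfl
    · exact absurd (H.inj b a i hx hy) fun h => hne h.symm
    · exact absurd (H.inj a b i hx hy) hne
    · rfl

/-- Piece: a connected component `C` of `H` minus its boundary (the component of a
non-boundary vertex `c`), together with its boundary neighbors, with
boundary-boundary edges removed and boundary labels erased. -/
def pieceComp (H : BLGraph X t) (c : H.V) : BLGraph X t where
  V := {x : H.V // x ∈ compIn H.G {y | H.bd y = none} c ∨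
        (H.bd x ≠ none ∧ ∃ y ∈ compIn H.G {y | H.bd y = none} c, H.G.Adj x y)}
  G := SimpleGraph.fromRel
    (fun x y => H.G.Adj x.1 y.1 ∧ (H.bd x.1 = none ∨ H.bd y.1 = none))
  lab x := {ℓ | H.bd x.1 = none ∧ ℓ ∈ H.lab x.1}
  bd x := H.bd x.1
  inj := fun x y i hx hy => Subtype.ext (H.inj _ _ i hx hy)

/-- The pieces of a boundaried labeled graph. -/
def pcs (H : BLGraph X t) : Set (BLGraph X t) :=
  {P | (∃ a, H.bd a ≠ none ∧ P = pieceBd H a) ∨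
       (∃ a ℓ, H.bd a ≠ none ∧ ℓ ∈ H.lab a ∧ P = pieceLab H a ℓ) ∨
       (∃ a b, ∃ hne : a ≠ b, H.bd a ≠ none ∧ H.bd b ≠ none ∧ H.G.Adj a b ∧
          P = pieceEdge H a b hne) ∨
       (∃ c, H.bd c = none ∧ P = pieceComp H c)}

/-- The `⊕`-sum of a nonempty list of boundaried labeled graphs. -/
noncomputable def glueList : BLGraph X t → List (BLGraph X t) → BLGraph X t
  | H, [] => H
  | H, P :: l => glue H (glueList P l)

/-- The multipieces of `H`: all `⊕`-sums of nonempty sets of pieces of `H`. -/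
def mpcs (H : BLGraph X t) : Set (BLGraph X t) :=
  {K | ∃ (P : BLGraph X t) (l : List (BLGraph X t)),
    (∀ p ∈ P :: l, p ∈ pcs H) ∧ (P :: l).Nodup ∧ K = glueList P l}

/-- Shift all boundary indices of a `t`-boundaried graph into `Fin (t+1)`
(the "do nothing" extension step). -/
def bumpBd (H : BLGraph X t) : BLGraph X (t+1) where
  V := H.V
  G := H.G
  lab := H.lab
  bd a := (H.bd a).map Fin.castSucc
  inj := by
    intro a b i ha hb
    obtain ⟨j, hj, hj2⟩ := Option.map_eq_some_iff.mp ha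
    obtain ⟨j', hj', hj'2⟩ := Option.map_eq_some_iff.mp hb
    have : j' = j := Fin.castSucc_injective _ (hj'2.trans hj2.symm)
    subst this
    exact H.inj a b j' hj hj'

/-- Extension step "increase the boundary": give a non-boundary vertex `v` the new
index `t+1`. -/
noncomputable def raiseBd (H : BLGraph X t) (v : H.V) : BLGraph X (t+1) :=
  letI := Classical.decEq H.V
  { V := H.V
    G := H.G
    lab := H.lab
    bd := fun a => if a = v then some (Fin.last t) else (H.bd a).map Fin.castSucc
    inj := by
      intro a b i ha hb
      split_ifs at ha hb with h1 h2 h2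
      · exact h1.trans h2.symm
      · obtain ⟨j, hj, hj2⟩ := Option.map_eq_some_iff.mp hb
        have : i = Fin.last t := (Option.some_injective _ ha).symm
        exact absurd (hj2.trans this) (Fin.castSucc_lt_last j).ne
      · obtain ⟨j, hj, hj2⟩ := Option.map_eq_some_iff.mp ha
        have : i = Fin.last t := (Option.some_injective _ hb).symm
        exact absurd (hj2.trans this) (Fin.castSucc_lt_last j).ne
      · obtain ⟨j, hj, hj2⟩ := Option.map_eq_some_iff.mp ha
        obtain ⟨j', hj', hj'2⟩ := Option.map_eq_some_iff.mp hb
        have : j' = j := Fin.castSucc_injective _ (hj'2.trans hj2.symm)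
        subst this
        exact H.inj a b j' hj hj' }

/-- Extension step "split": split a boundary vertex `u` into `u` and a new vertex
with index `t+1` joined to `u` by an edge; the edges from `u` to the vertices of
`S` move to the new vertex, and the labels in `K` move to the new vertex. -/
noncomputable def splitBd (H : BLGraph X t) (u : H.V) (S : Set H.V) (K : Set X) :
    BLGraph X (t+1) :=
  letI := Classical.decEq H.V
  { V := H.V ⊕ Unit
    G := SimpleGraph.fromRel (fun x y =>
      match x, y with
      | .inl a, .inl b => H.G.Adj a b ∧ ¬(b = u ∧ a ∈ S) ∧ ¬(a = u ∧ b ∈ S)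
      | .inl a, .inr _ => (H.G.Adj a u ∧ a ∈ S) ∨ a = u
      | _, _ => False)
    lab := Sum.elim (fun a => if a = u then H.lab a \ K else H.lab a)
      (fun _ => K ∩ H.lab u)
    bd := Sum.elim (fun a => (H.bd a).map Fin.castSucc) (fun _ => some (Fin.last t))
    inj := by
      rintro (a | a) (b | b) i ha hb
      · obtain ⟨j, hj, hj2⟩ := Option.map_eq_some_iff.mp ha
        obtain ⟨j', hj', hj'2⟩ := Option.map_eq_some_iff.mp hb
        have : j' = j := Fin.castSucc_injective _ (hj'2.trans hj2.symm)
        subst this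
        exact congrArg Sum.inl (H.inj a b j' hj hj')
      · obtain ⟨j, hj, hj2⟩ := Option.map_eq_some_iff.mp ha
        have : i = Fin.last t := (Option.some_injective _ hb).symm
        exact absurd (hj2.trans this) (Fin.castSucc_lt_last j).ne
      · obtain ⟨j, hj, hj2⟩ := Option.map_eq_some_iff.mp hb
        have : i = Fin.last t := (Option.some_injective _ ha).symm
        exact absurd (hj2.trans this) (Fin.castSucc_lt_last j).ne
      · exact congrArg Sum.inr rfl }

/-- The single-step extension `ext₁` of a boundaried labeled graph. -/
def ext1 (H : BLGraph X t) : Set (BLGraph X (t+1)) :=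
  {K | K = bumpBd H ∨
       (∃ v, H.bd v = none ∧ K = raiseBd H v) ∨
       (∃ u S Kl, H.bd u ≠ none ∧ S ⊆ {a | H.G.Adj a u} ∧ Kl ⊆ H.lab u ∧
          K = splitBd H u S Kl)}

/-- `ext_t(Q)`: all `t`-boundaried graphs obtainable from members of `Q` (viewed as
`0`-boundaried graphs) by `t` successive extension operations. -/
def extT (X : Type) : (t : ℕ) → Set (BLGraph X 0) → Set (BLGraph X t)
  | 0, Q => Q
  | (t+1), Q => {K | ∃ H ∈ extT X t Q, K ∈ ext1 H}

/-- `mpcs_{+t}(Q) = mpcs(ext_t(Q))`. -/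
def mpcsPlus (t : ℕ) (Q : Set (BLGraph X 0)) : Set (BLGraph X t) :=
  {K | ∃ H ∈ extT X t Q, K ∈ mpcs H}

/-- `folio_{Q,t}(H)`: the members of `mpcs_{+t}(Q)` that are boundaried labeled
minors of `H`. -/
def folioQ (Q : Set (BLGraph X 0)) (t : ℕ) (H : BLGraph X t) : Set (BLGraph X t) :=
  {P | P ∈ mpcsPlus t Q ∧ BMinor P H}

/-- Isomorphism of boundaried labeled graphs. -/
def BLIso (H K : BLGraph X t) : Prop :=
  ∃ e : H.V ≃ K.V, (∀ a b, H.G.Adj a b ↔ K.G.Adj (e a) (e b)) ∧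
    (∀ a, H.lab a = K.lab (e a)) ∧ (∀ a, H.bd a = K.bd (e a))

end BLGraph

/-!
Every extension step preserves connectivity (the new vertex of a split stays adjacent to
the vertex it was split from), so all graphs in `ext_t(Q)` are connected. A piece without
boundary vertices is the piece of a component `C` of `G` minus its boundary that has no
boundary neighbours; in a connected `G` this forces `C` to be all of `G`. Hence a
boundaryless multipiece consists of a single piece (the pieces of a multipiece are
distinct), and that piece is `G` itself.
-/

namespace SimpleGraph

variable {V : Type*} {G : SimpleGraph V}

lemma Reachable.mem_of_adj_closed {s : Set V} (hs : ∀ a b, a ∈ s → G.Adj a b → b ∈ s)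
    {u v : V} (h : G.Reachable u v) (hu : u ∈ s) : v ∈ s := by
  rw [reachable_iff_reflTransGen] at h
  induction h with
  | refl => exact hu
  | tail _ hbc ih => exact hs _ _ ih hbc

lemma Connected.eq_univ_of_adj_closed (hG : G.Connected) {s : Set V}
    (hs : ∀ a b, a ∈ s → G.Adj a b → b ∈ s) {u : V} (hu : u ∈ s) : s = univ :=
  eq_univ_of_forall fun v => (hG.preconnected u v).mem_of_adj_closed hs hu

end SimpleGraph

namespace BLGraph

variable {X : Type} {t : ℕ}

section Split

variable (H : BLGraph X t) (u : H.V) (S : Set H.V) (K : Set X)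

lemma splitBd_adj_inl_inl {a b : H.V} (h : H.G.Adj a b) (hb : ¬(b = u ∧ a ∈ S))
    (ha : ¬(a = u ∧ b ∈ S)) : (splitBd H u S K).G.Adj (.inl a) (.inl b) :=
  (fromRel_adj _ _ _).mpr ⟨fun he => h.ne (Sum.inl_injective he), .inl ⟨h, hb, ha⟩⟩

lemma splitBd_adj_inl_inr_of_mem {a : H.V} (h : H.G.Adj a u) (ha : a ∈ S) :
    (splitBd H u S K).G.Adj (.inl a) (.inr ()) :=
  (fromRel_adj _ _ _).mpr ⟨Sum.inl_ne_inr, .inl (.inl ⟨h, ha⟩)⟩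

lemma splitBd_adj_inl_inr_self : (splitBd H u S K).G.Adj (.inl u) (.inr ()) :=
  (fromRel_adj _ _ _).mpr ⟨Sum.inl_ne_inr, .inl (.inr rfl)⟩

lemma splitBd_reachable_of_adj {a b : H.V} (h : H.G.Adj a b) :
    (splitBd H u S K).G.Reachable (.inl a) (.inl b) := by
  by_cases hb : b = u ∧ a ∈ S
  · obtain ⟨rfl, ha⟩ := hb
    exact (splitBd_adj_inl_inr_of_mem H b S K h ha).reachable.trans
      (splitBd_adj_inl_inr_self H b S K).reachable.symm
  by_cases ha : a = u ∧ b ∈ S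
  · obtain ⟨rfl, hbS⟩ := ha
    exact (splitBd_adj_inl_inr_self H a S K).reachable.trans
      (splitBd_adj_inl_inr_of_mem H a S K h.symm hbS).reachable.symm
  exact (splitBd_adj_inl_inl H u S K h hb ha).reachable

lemma splitBd_connected (hH : H.G.Connected) : (splitBd H u S K).G.Connected := by
  have inl_reach : {a | (splitBd H u S K).G.Reachable (.inl a) (.inr ())} = univ :=
    hH.eq_univ_of_adj_closed
      (fun _ _ ha hab => (splitBd_reachable_of_adj H u S K hab.symm).trans ha)
      (splitBd_adj_inl_inr_self H u S K).reachable
  have reach : ∀ x, (splitBd H u S K).G.Reachable x (.inr ()) := by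
    rintro (a | ⟨⟩)
    · exact eq_univ_iff_forall.mp inl_reach a
    · rfl
  exact { preconnected := fun x y => (reach x).trans (reach y).symm
          nonempty := ⟨.inr ()⟩ }

end Split

lemma ext1_connected {H : BLGraph X t} (hH : H.G.Connected) {K : BLGraph X (t+1)}
    (hK : K ∈ ext1 H) : K.G.Connected := by
  rcases hK with rfl | ⟨v, -, rfl⟩ | ⟨u, S, L, -, -, -, rfl⟩
  · exact hH
  · exact hH
  · exact splitBd_connected H u S L hH

lemma extT_connected {Q : Set (BLGraph X 0)} (hQ : ∀ q ∈ Q, q.G.Connected) :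
    ∀ {t : ℕ} {G : BLGraph X t}, G ∈ extT X t Q → G.G.Connected
  | 0, G, hG => hQ G hG
  | _ + 1, _, ⟨_, hH, hG⟩ => ext1_connected (extT_connected hQ hH) hG

def Boundaryless (H : BLGraph X t) : Prop := ∀ a, H.bd a = none

lemma Boundaryless.of_glue {G₁ G₂ : BLGraph X t} (h : (glue G₁ G₂).Boundaryless) :
    G₁.Boundaryless ∧ G₂.Boundaryless := by
  have h₁ : G₁.Boundaryless := fun a => h (.inl a)
  exact ⟨h₁, fun b => h (.inr ⟨b, fun i _ a ha => by simp [h₁ a] at ha⟩)⟩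

lemma Boundaryless.of_mem_glueList {P : BLGraph X t} {l : List (BLGraph X t)}
    (h : (glueList P l).Boundaryless) {p : BLGraph X t} (hp : p ∈ P :: l) :
    p.Boundaryless := by
  induction l generalizing P with
  | nil => rwa [List.mem_singleton.mp hp]
  | cons P' l ih =>
    obtain ⟨hP, hl⟩ := Boundaryless.of_glue h
    rcases List.mem_cons.mp hp with rfl | hp
    · exact hP
    · exact ih hl hp

lemma eq_pieceComp_of_mem_pcs {G p : BLGraph X t} (hp : p ∈ pcs G) (hb : p.Boundaryless) :
    ∃ c, G.bd c = none ∧ p = pieceComp G c := by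
  rcases hp with ⟨a, ha, rfl⟩ | ⟨a, ℓ, ha, -, rfl⟩ | ⟨a, b, hne, ha, -, -, rfl⟩ | hc
  · exact absurd (hb PUnit.unit) ha
  · exact absurd (hb PUnit.unit) ha
  · exact absurd (hb true) ha
  · exact hc

-- `pieceComp H c` depends on `c` only through this set; rewriting the set inside
-- `pieceComp` itself fails, because its `inj` field is elaborated with `c` fixed.
def compPiece (H : BLGraph X t) (C : Set H.V) : BLGraph X t where
  V := {x : H.V // x ∈ C ∨ (H.bd x ≠ none ∧ ∃ y ∈ C, H.G.Adj x y)}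
  G := SimpleGraph.fromRel
    (fun x y => H.G.Adj x.1 y.1 ∧ (H.bd x.1 = none ∨ H.bd y.1 = none))
  lab x := {ℓ | H.bd x.1 = none ∧ ℓ ∈ H.lab x.1}
  bd x := H.bd x.1
  inj := fun _ _ i hx hy => Subtype.ext (H.inj _ _ i hx hy)

lemma pieceComp_eq_compPiece (H : BLGraph X t) (c : H.V) :
    pieceComp H c = compPiece H (compIn H.G {y | H.bd y = none} c) := rfl

section Component

variable {G : BLGraph X t} {c : G.V}

lemma compIn_eq_univ_of_boundaryless (hG : G.G.Connected) (hc : G.bd c = none)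
    (hb : (pieceComp G c).Boundaryless) : compIn G.G {y | G.bd y = none} c = univ := by
  refine hG.eq_univ_of_adj_closed (fun a b ha hab => ?_) ⟨hc, .refl c⟩
  have hbn : G.bd b = none := by
    by_contra hbd
    exact hbd (hb ⟨b, .inr ⟨hbd, a, ha, hab.symm⟩⟩)
  exact ⟨hbn, ha.2.trans (Adj.reachable (G := within G.G _) ⟨ha.1, hbn, hab⟩)⟩

lemma pieceComp_eq_of_mem_compIn {c' : G.V} (h : c' ∈ compIn G.G {y | G.bd y = none} c) :
    pieceComp G c' = pieceComp G c := by
  have : compIn G.G {y | G.bd y = none} c' = compIn G.G {y | G.bd y = none} c :=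
    ext fun _ => and_congr_right fun _ => ⟨h.2.trans, h.2.symm.trans⟩
  rw [pieceComp_eq_compPiece, pieceComp_eq_compPiece, this]

lemma pieceComp_blIso (h : compIn G.G {y | G.bd y = none} c = univ) :
    BLIso (pieceComp G c) G := by
  have hbd : G.Boundaryless := fun v => (h ▸ mem_univ v : v ∈ compIn _ _ _).1
  refine ⟨Equiv.subtypeUnivEquiv fun v => .inl (h ▸ mem_univ v), fun a b => ?_,
    fun a => ?_, fun _ => rfl⟩
  · refine (fromRel_adj (V := (pieceComp G c).V) _ a b).trans ?_
    exact ⟨fun ⟨_, hab⟩ => hab.elim (·.1) (·.1.symm),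
      fun hab => ⟨fun he => hab.ne (congrArg Subtype.val he), .inl ⟨hab, .inl (hbd _)⟩⟩⟩
  · ext ℓ
    exact and_iff_right (hbd a.1)

end Component

lemma blIso_of_mem_mpcs {G K : BLGraph X t} (hG : G.G.Connected) (hK : K ∈ mpcs G)
    (hb : K.Boundaryless) : BLIso K G := by
  obtain ⟨P, l, hpcs, hnd, rfl⟩ := hK
  have whole : ∀ p ∈ P :: l,
      ∃ c, compIn G.G {y | G.bd y = none} c = univ ∧ p = pieceComp G c := fun p hp => by
    obtain ⟨c, hc, rfl⟩ := eq_pieceComp_of_mem_pcs (hpcs p hp) (hb.of_mem_glueList hp)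
    exact ⟨c, compIn_eq_univ_of_boundaryless hG hc (hb.of_mem_glueList hp), rfl⟩
  obtain ⟨c, hc, rfl⟩ := whole P List.mem_cons_self
  cases l with
  | nil => exact pieceComp_blIso hc
  | cons P' l =>
    obtain ⟨c', -, rfl⟩ := whole P' (List.mem_cons_of_mem _ List.mem_cons_self)
    have hsame := pieceComp_eq_of_mem_compIn (hc ▸ mem_univ c')
    exact absurd (hsame ▸ List.mem_cons_self) (List.nodup_cons.mp hnd).1

end BLGraph

open BLGraph in
/-- every `H ∈ mpcs_{+t}(Q)` (for a set `Q` of connected labeled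
graphs) either contains a boundary vertex or is (up to isomorphism, as graphs in
`mpcs` are considered up to isomorphism) a member of `ext_t(Q)`. -/
theorem stmt10 {X : Type} {t : ℕ} (Q : Set (BLGraph X 0)) (hQ : ∀ q ∈ Q, q.G.Connected)
    (H : BLGraph X t) (hH : H ∈ mpcsPlus t Q) :
    (∃ a, H.bd a ≠ none) ∨ ∃ K ∈ extT X t Q, BLIso H K := by
  by_cases hbd : ∃ a, H.bd a ≠ none
  · exact .inl hbd
  obtain ⟨G, hG, hH⟩ := hH
  exact .inr ⟨G, hG, blIso_of_mem_mpcs (extT_connected hQ hG) hH (not_exists_not.mp hbd)⟩
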